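/- arXiv:1204.2906 — 6 statements merged into one kernel-verified Lean document; each statement's English description precedes it below -/
import Mathlib

section
/- Let f : ℝ → ℝ be continuous on [0,∞), continuously differentiable with f' strictly decreasing on [0,∞), bounded above, f(0) = 0, and let r > 0 with f'(0) > r. Then for every u with 0 ≤ u < f'(0) − r there exists a unique x*(u) > 0 with f(x*(u)) = (r + u)·x*(u); moreover the map u ↦ x*(u) is strictly decreasing on [0, f'(0) − r). -/
/-!
Writing `f x = v x` as `f x / x = v`, the equilibria for the rate `v = r + u` are the level sets
of the secant slope `x ↦ f x / x` on `(0, ∞)`. Strict concavity with `f 0 = 0` makes this slope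
strictly decreasing, which gives uniqueness and the monotonicity in `u`. The slope tends to `f' 0`
at `0⁺` and, `f` being bounded above, drops below every `v > 0` near `∞`; the intermediate value
theorem then produces an equilibrium for every `v ∈ (0, f' 0)`.
-/

open Set Filter Topology

theorem StrictConcaveOn.div_strictAntiOn_Ioi {f : ℝ → ℝ} (hf : StrictConcaveOn ℝ (Ici 0) f)
    (hf0 : f 0 = 0) : StrictAntiOn (fun x => f x / x) (Ioi 0) := by
  intro x hx y hy hxy
  simpa only [hf0, sub_zero] using
    hf.secant_strict_mono self_mem_Ici (Ioi_subset_Ici_self hx) (Ioi_subset_Ici_self hy)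
      (ne_of_gt hx) (ne_of_gt hy) hxy

theorem HasDerivAt.tendsto_div_nhdsGT_zero {f : ℝ → ℝ} {d : ℝ} (hf : HasDerivAt f d 0)
    (hf0 : f 0 = 0) : Tendsto (fun x => f x / x) (𝓝[>] 0) (𝓝 d) := by
  simpa only [zero_add, hf0, sub_zero, smul_eq_mul, inv_mul_eq_div] using
    hf.tendsto_slope_zero_right

theorem BddAbove.eventually_div_lt {f : ℝ → ℝ} {v : ℝ} (hf : BddAbove (f '' Ici 0)) (hv : 0 < v) :
    ∀ᶠ x in atTop, f x / x < v := by
  obtain ⟨M, hM⟩ := hf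
  have hM_div : ∀ᶠ x in atTop, M / x < v :=
    (tendsto_const_nhds.div_atTop tendsto_id).eventually_lt_const hv
  filter_upwards [hM_div, eventually_gt_atTop 0] with x hMx hx
  calc f x / x ≤ M / x := div_le_div_of_nonneg_right (hM (mem_image_of_mem f hx.le)) hx.le
    _ < v := hMx

theorem exists_mem_Ioi_eq_of_tendsto_nhdsGT {g : ℝ → ℝ} {a d v : ℝ} (hg : ContinuousOn g (Ioi a))
    (ha : Tendsto g (𝓝[>] a) (𝓝 d)) (htop : ∀ᶠ x in atTop, g x < v) (hvd : v < d) :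
    ∃ x > a, g x = v := by
  obtain ⟨X, hgX, hX⟩ := (htop.and (eventually_gt_atTop a)).exists
  exact isPreconnected_Ioi.intermediate_value_Ico (l := 𝓝[>] a) hX inf_le_right hg ha ⟨hgX.le, hvd⟩

theorem equilibrium_exists_unique_and_antitone_general
    (f : ℝ → ℝ) (r : ℝ)
    (hdiff : ∀ x ∈ Set.Ici (0 : ℝ), DifferentiableAt ℝ f x)
    (hconc : StrictAntiOn (deriv f) (Set.Ici (0 : ℝ)))
    (hbdd : BddAbove (f '' Set.Ici (0 : ℝ)))
    (hf0 : f 0 = 0)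
    (hr : 0 < r) :
    (∀ u : ℝ, 0 ≤ u → u < deriv f 0 - r → ∃! x : ℝ, 0 < x ∧ f x = (r + u) * x) ∧
    (∀ u₁ u₂ x₁ x₂ : ℝ, 0 ≤ u₁ → u₁ < u₂ → u₂ < deriv f 0 - r →
      0 < x₁ → f x₁ = (r + u₁) * x₁ → 0 < x₂ → f x₂ = (r + u₂) * x₂ → x₂ < x₁) := by
  have hcont : ContinuousOn f (Ici 0) := fun x hx => (hdiff x hx).continuousAt.continuousWithinAt
  have hslope_anti : StrictAntiOn (fun x => f x / x) (Ioi 0) := by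
    refine (StrictAntiOn.strictConcaveOn_of_deriv (convex_Ici 0) hcont ?_).div_strictAntiOn_Ioi hf0
    simpa only [interior_Ici] using hconc.mono Ioi_subset_Ici_self
  have hslope_cont : ContinuousOn (fun x => f x / x) (Ioi 0) :=
    (hcont.mono Ioi_subset_Ici_self).div continuousOn_id fun x hx => ne_of_gt hx
  have hslope_zero := (hdiff 0 self_mem_Ici).hasDerivAt.tendsto_div_nhdsGT_zero hf0
  have hequilibrium {v x : ℝ} (hx : 0 < x) : f x = v * x ↔ f x / x = v := (div_eq_iff hx.ne').symm
  refine ⟨fun u hu hu' => ?_, fun u₁ u₂ x₁ x₂ hu₁ hu₁₂ hu₂ hx₁ he₁ hx₂ he₂ => ?_⟩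
  · obtain ⟨x, hx, hfx⟩ := exists_mem_Ioi_eq_of_tendsto_nhdsGT (v := r + u) hslope_cont hslope_zero
      (hbdd.eventually_div_lt (by linarith)) (by linarith)
    refine ⟨x, ⟨hx, (hequilibrium hx).2 hfx⟩, fun y ⟨hy, hfy⟩ => hslope_anti.injOn hy hx ?_⟩
    exact ((hequilibrium hy).1 hfy).trans hfx.symm
  · rw [hequilibrium hx₁] at he₁
    rw [hequilibrium hx₂] at he₂
    exact (hslope_anti.lt_iff_gt hx₁ hx₂).1 (by simp only [he₁, he₂]; linarith)

/-- For every admissible constant dilution rate `u ∈ [0, f' 0 - r)` there is a unique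
positive equilibrium `x*(u)` of the day dynamics, i.e. a unique `x > 0` with
`f x = (r + u) x`; moreover the equilibrium is strictly decreasing in `u`. -/
theorem equilibrium_exists_unique_and_antitone
    (f : ℝ → ℝ) (r : ℝ)
    (hdiff : ∀ x ∈ Set.Ici (0 : ℝ), DifferentiableAt ℝ f x)
    (hderiv_cont : ContinuousOn (deriv f) (Set.Ici (0 : ℝ)))
    (hconc : StrictAntiOn (deriv f) (Set.Ici (0 : ℝ)))
    (hbdd : BddAbove (f '' Set.Ici (0 : ℝ)))
    (hf0 : f 0 = 0)
    (hr : 0 < r)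
    (hr' : r < deriv f 0) :
    (∀ u : ℝ, 0 ≤ u → u < deriv f 0 - r → ∃! x : ℝ, 0 < x ∧ f x = (r + u) * x) ∧
    (∀ u₁ u₂ x₁ x₂ : ℝ, 0 ≤ u₁ → u₁ < u₂ → u₂ < deriv f 0 - r →
      0 < x₁ → f x₁ = (r + u₁) * x₁ → 0 < x₂ → f x₂ = (r + u₂) * x₂ → x₂ < x₁) :=
  equilibrium_exists_unique_and_antitone_general f r hdiff hconc hbdd hf0 hr
end

section
/- Let f : ℝ → ℝ be continuously differentiable and strictly concave on [0,∞) with f(0) = 0, let r > 0 and 0 < T̄ < T satisfy Assumption 1: f'(0)·T̄ > r·T. Then there exists ε > 0 such that for every x₀ ∈ (0, ε), any positive continuous solution x : [0,T] → (0,∞) of the closed-reactor dynamics x' = f(x) − r·x on (0,T̄) and x' = −r·x on (T̄,T) with x(0) = x₀ satisfies x(T) > x₀. -/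
/-!
Since `f 0 = 0` and `f'(0) > r T / Tb`, there are `c` with `r T < c Tb` and `δ > 0` such that
`f y ≥ c y` on `(0, δ)`. While the biomass stays below `δ` it therefore grows during the day at
rate at least `c - r > 0`; after the last time it is at or above `δ` it only increases, so
at dusk `x Tb ≥ min δ (x₀ e^{(c - r) Tb})`. The night costs at most a factor
`e^{-r (T - Tb)}`, and `e^{(c - r) Tb - r (T - Tb)} = e^{c Tb - r T} > 1`; hence
`ε = δ e^{-r (T - Tb)}` works.
-/

open Set Filter Topology Real

theorem exists_mul_lt_of_hasDerivAt_zero {f : ℝ → ℝ} {f' c : ℝ} (hf : HasDerivAt f f' 0)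
    (hf0 : f 0 = 0) (hc : c < f') : ∃ δ > 0, ∀ y ∈ Ioo 0 δ, c * y < f y := by
  have hslope : ∀ᶠ y in 𝓝[>] 0, c < slope f 0 y :=
    (hasDerivAt_iff_tendsto_slope_left_right.1 hf).2.eventually (lt_mem_nhds hc)
  obtain ⟨δ, hδ, hsub⟩ := mem_nhdsGT_iff_exists_Ioo_subset.1 hslope
  refine ⟨δ, hδ, fun y hy => ?_⟩
  have hy' : c < slope f 0 y := hsub hy
  rw [slope_def_field, hf0, sub_zero, sub_zero, lt_div_iff₀ hy.1] at hy'
  exact hy'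

theorem mul_exp_le_of_mul_le_deriv {x x' : ℝ → ℝ} {k a b : ℝ} (hab : a ≤ b)
    (hx : ContinuousOn x (Icc a b)) (hx' : ∀ t ∈ Ioo a b, HasDerivAt x (x' t) t)
    (hk : ∀ t ∈ Ioo a b, k * x t ≤ x' t) :
    x a * exp (k * (b - a)) ≤ x b := by
  have hmono : MonotoneOn (fun t => x t * exp (-(k * t))) (Icc a b) := by
    refine monotoneOn_of_hasDerivWithinAt_nonneg (convex_Icc a b) (hx.mul (by fun_prop))
      (f' := fun t => (x' t - k * x t) * exp (-(k * t))) (fun t ht => ?_) (fun t ht => ?_)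
    · rw [interior_Icc] at ht ⊢
      have hexp : HasDerivAt (fun t => exp (-(k * t))) (exp (-(k * t)) * -k) t := by
        simpa using ((hasDerivAt_id t).const_mul k).neg.exp
      exact (((hx' t ht).mul hexp).congr_deriv (by ring)).hasDerivWithinAt
    · rw [interior_Icc] at ht
      exact mul_nonneg (sub_nonneg.2 (hk t ht)) (exp_pos _).le
  calc x a * exp (k * (b - a)) = x a * exp (-(k * a)) * exp (k * b) := by
        rw [mul_assoc, ← exp_add]; ring_nf
    _ ≤ x b * exp (-(k * b)) * exp (k * b) :=
        mul_le_mul_of_nonneg_right (hmono (left_mem_Icc.2 hab) (right_mem_Icc.2 hab) hab)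
          (exp_pos _).le
    _ = x b := by rw [mul_assoc, ← exp_add, neg_add_cancel, exp_zero, mul_one]

theorem min_le_of_mul_le_deriv_of_lt {x x' : ℝ → ℝ} {k δ a b : ℝ} (hab : a ≤ b)
    (hk : 0 ≤ k) (hδ : 0 ≤ δ) (hx : ContinuousOn x (Icc a b))
    (hx' : ∀ t ∈ Ioo a b, HasDerivAt x (x' t) t)
    (hgrowth : ∀ t ∈ Ioo a b, x t < δ → k * x t ≤ x' t) :
    min δ (x a * exp (k * (b - a))) ≤ x b := by
  set S := Icc a b ∩ x ⁻¹' Ici δ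
  rcases S.eq_empty_or_nonempty with hS | hS
  · refine min_le_of_right_le (mul_exp_le_of_mul_le_deriv hab hx hx' fun t ht => ?_)
    refine hgrowth t ht (not_le.1 fun hδt => ?_)
    exact (eq_empty_iff_forall_notMem.1 hS) t ⟨Ioo_subset_Icc_self ht, hδt⟩
  · have hbdd : BddAbove S := bddAbove_Icc.mono inter_subset_left
    set s := sSup S
    have hsS : s ∈ S :=
      (hx.preimage_isClosed_of_isClosed isClosed_Icc isClosed_Ici).csSup_mem hS hbdd
    have hbelow : ∀ t ∈ Ioo s b, x t < δ := fun t ht => not_le.1 fun hδt =>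
      ht.1.not_ge (le_csSup hbdd ⟨⟨hsS.1.1.trans ht.1.le, ht.2.le⟩, hδt⟩)
    have hsb : x s * exp (k * (b - s)) ≤ x b :=
      mul_exp_le_of_mul_le_deriv hsS.1.2 (hx.mono (Icc_subset_Icc_left hsS.1.1))
        (fun t ht => hx' t ⟨hsS.1.1.trans_lt ht.1, ht.2⟩)
        (fun t ht => hgrowth t ⟨hsS.1.1.trans_lt ht.1, ht.2⟩ (hbelow t ht))
    refine min_le_of_left_le ?_
    calc δ ≤ x s := hsS.2
      _ ≤ x s * exp (k * (b - s)) :=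
        le_mul_of_one_le_right (hδ.trans hsS.2)
          (one_le_exp (mul_nonneg hk (sub_nonneg.2 hsS.1.2)))
      _ ≤ x b := hsb

theorem closed_reactor_growth_for_small_x0_general
    (f : ℝ → ℝ) (r Tb T : ℝ)
    (hdiff : ∀ y ∈ Set.Ici (0 : ℝ), DifferentiableAt ℝ f y)
    (hf0 : f 0 = 0)
    (hr : 0 < r)
    (hTb : 0 < Tb) (hT : Tb < T)
    (hassum : r * T < deriv f 0 * Tb) :
    ∃ ε > 0, ∀ x₀ ∈ Set.Ioo (0 : ℝ) ε, ∀ x : ℝ → ℝ,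
      ContinuousOn x (Set.Icc 0 T) →
      (∀ t ∈ Set.Icc (0 : ℝ) T, 0 < x t) →
      (∀ t ∈ Set.Ioo (0 : ℝ) Tb, HasDerivAt x (f (x t) - r * x t) t) →
      (∀ t ∈ Set.Ioo Tb T, HasDerivAt x (-(r * x t)) t) →
      x 0 = x₀ →
      x₀ < x T := by
  obtain ⟨c, hrTc, hcf⟩ := exists_between ((div_lt_iff₀ hTb).2 hassum)
  have hcTb : r * T < c * Tb := (div_lt_iff₀ hTb).1 hrTc
  have hrc : r < c := lt_of_mul_lt_mul_right (by nlinarith) hTb.le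
  obtain ⟨δ, hδ, hfδ⟩ :=
    exists_mul_lt_of_hasDerivAt_zero (hdiff 0 self_mem_Ici).hasDerivAt hf0 hcf
  refine ⟨δ * exp (-r * (T - Tb)), by positivity, ?_⟩
  rintro x₀ ⟨hx₀, hx₀ε⟩ x hx hpos hday hnight rfl
  have hdusk : min δ (x 0 * exp ((c - r) * (Tb - 0))) ≤ x Tb :=
    min_le_of_mul_le_deriv_of_lt hTb.le (sub_nonneg.2 hrc.le) hδ.le
      (hx.mono (Icc_subset_Icc_right hT.le)) hday fun t ht hxδ => by
        linarith [hfδ (x t) ⟨hpos t ⟨ht.1.le, ht.2.le.trans hT.le⟩, hxδ⟩]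
  rw [sub_zero] at hdusk
  have hdawn : x Tb * exp (-r * (T - Tb)) ≤ x T :=
    mul_exp_le_of_mul_le_deriv hT.le (hx.mono (Icc_subset_Icc_left hTb.le)) hnight
      fun t _ => (neg_mul r (x t)).le
  have hgain : 1 < exp ((c - r) * Tb) * exp (-r * (T - Tb)) := by
    rw [← exp_add, one_lt_exp_iff]
    linarith
  calc x 0 < min (δ * exp (-r * (T - Tb))) (x 0 * (exp ((c - r) * Tb) * exp (-r * (T - Tb)))) :=
        lt_min hx₀ε (lt_mul_of_one_lt_right hx₀ hgain)
    _ = min δ (x 0 * exp ((c - r) * Tb)) * exp (-r * (T - Tb)) := by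
        rw [min_mul_of_nonneg _ _ (exp_pos _).le, mul_assoc]
    _ ≤ x Tb * exp (-r * (T - Tb)) := by gcongr
    _ ≤ x T := hdawn

/-- Under Assumption 1 (`f'(0)·Tb > r·T`), small initial conditions grow over one day in
the closed reactor: there is `ε > 0` such that every positive solution of
`ẋ = f(x) − r x` on `(0,Tb)` and `ẋ = −r x` on `(Tb,T)` starting at `x₀ ∈ (0,ε)`
satisfies `x(T) > x₀`. -/
theorem closed_reactor_growth_for_small_x0
    (f : ℝ → ℝ) (r Tb T : ℝ)
    (hdiff : ∀ y ∈ Set.Ici (0 : ℝ), DifferentiableAt ℝ f y)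
    (hderiv_cont : ContinuousOn (deriv f) (Set.Ici (0 : ℝ)))
    (hconc : StrictAntiOn (deriv f) (Set.Ici (0 : ℝ)))
    (hf0 : f 0 = 0)
    (hr : 0 < r)
    (hTb : 0 < Tb) (hT : Tb < T)
    (hassum : r * T < deriv f 0 * Tb) :
    ∃ ε > 0, ∀ x₀ ∈ Set.Ioo (0 : ℝ) ε, ∀ x : ℝ → ℝ,
      ContinuousOn x (Set.Icc 0 T) →
      (∀ t ∈ Set.Icc (0 : ℝ) T, 0 < x t) →
      (∀ t ∈ Set.Ioo (0 : ℝ) Tb, HasDerivAt x (f (x t) - r * x t) t) →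
      (∀ t ∈ Set.Ioo Tb T, HasDerivAt x (-(r * x t)) t) →
      x 0 = x₀ →
      x₀ < x T :=
  closed_reactor_growth_for_small_x0_general f r Tb T hdiff hf0 hr hTb hT hassum
end

section
/- Let f : ℝ → ℝ be continuously differentiable and strictly concave on [0,∞), bounded above, with f(0) = 0 and f'(0) > r > 0, and let x̄⁰ > 0 be the unique positive solution of f(x) = r·x. Let 0 < T̄ < T and let x : [0,T] → (0,∞) be a continuous solution of the closed-reactor dynamics x' = f(x) − r·x on (0,T̄) and x' = −r·x on (T̄,T). If x(0) ≥ x̄⁰ then x(T) < x(0). -/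
/-!
Strict concavity with `f 0 = 0` makes `f y / y` strictly decreasing, so the net day growth
`f y - r y` is negative above `x̄⁰`. Hence during the day the biomass can never rise above its
initial value (at the last time it is `≤ x(0)` it would have to grow while above `x(0)`), and at
night it decays strictly.
-/

open Set

section StrictConcave

variable {𝕜 : Type*} [Field 𝕜] [LinearOrder 𝕜] [IsStrictOrderedRing 𝕜] {f : 𝕜 → 𝕜}

theorem StrictConcaveOn.div_lt_div_of_map_zero (hf : StrictConcaveOn 𝕜 (Ici 0) f)
    (hf0 : f 0 = 0) {a b : 𝕜} (ha : 0 < a) (hab : a < b) : f b / b < f a / a := by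
  simpa [hf0] using hf.secant_strict_mono self_mem_Ici ha.le (ha.trans hab).le ha.ne'
    (ha.trans hab).ne' hab

theorem StrictConcaveOn.lt_mul_of_map_eq_mul (hf : StrictConcaveOn 𝕜 (Ici 0) f)
    (hf0 : f 0 = 0) {r a b : 𝕜} (ha : 0 < a) (hfa : f a = r * a) (hab : a < b) :
    f b < r * b := by
  have hslope := hf.div_lt_div_of_map_zero hf0 ha hab
  rwa [hfa, mul_div_cancel_right₀ r ha.ne', div_lt_iff₀ (ha.trans hab)] at hslope

end StrictConcave

theorem le_apply_left_of_hasDerivAt_nonpos_of_gt {x x' : ℝ → ℝ} {a b : ℝ}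
    (hx : ContinuousOn x (Icc a b)) (hx' : ∀ t ∈ Ioo a b, HasDerivAt x (x' t) t)
    (hdecr : ∀ t ∈ Ioo a b, x a < x t → x' t ≤ 0) : ∀ t ∈ Icc a b, x t ≤ x a := by
  by_contra! ⟨t₁, ht₁, hxt₁⟩
  -- the last time `t₀ ≤ t₁` at which `x` is still at most `x a`
  let S := Icc a t₁ ∩ x ⁻¹' Iic (x a)
  have hS_closed : IsClosed S :=
    (hx.mono (Icc_subset_Icc_right ht₁.2)).preimage_isClosed_of_isClosed isClosed_Icc isClosed_Iic
  have hS : IsCompact S := isCompact_Icc.of_isClosed_subset hS_closed inter_subset_left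
  obtain ⟨t₀, ⟨⟨ht₀a, ht₀t₁⟩, hxt₀⟩, ht₀max⟩ :=
    hS.exists_isGreatest ⟨a, ⟨left_mem_Icc.2 ht₁.1, le_refl (x a)⟩⟩
  have habove : ∀ t ∈ Ioc t₀ t₁, x a < x t := fun t ht ↦
    not_le.1 fun hle ↦ (ht.1.trans_le (ht₀max ⟨⟨ht₀a.trans ht.1.le, ht.2⟩, hle⟩)).false
  have hsub : Ioo t₀ t₁ ⊆ Ioo a b := Ioo_subset_Ioo ht₀a ht₁.2
  have hanti : AntitoneOn x (Icc t₀ t₁) := by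
    refine antitoneOn_of_hasDerivWithinAt_nonpos (f' := x') (convex_Icc _ _)
      (hx.mono (Icc_subset_Icc ht₀a ht₁.2)) ?_ ?_ <;> rw [interior_Icc] <;> intro t ht
    · exact (hx' t (hsub ht)).hasDerivWithinAt
    · exact hdecr t (hsub ht) (habove t (Ioo_subset_Ioc_self ht))
  have hdrop : x t₁ ≤ x t₀ := hanti (left_mem_Icc.2 ht₀t₁) (right_mem_Icc.2 ht₀t₁) ht₀t₁
  exact (hxt₁.trans_le (hdrop.trans hxt₀)).false

theorem closed_reactor_decrease_above_equilibrium_general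
    (f : ℝ → ℝ) (r Tb T xbar0 : ℝ) (x : ℝ → ℝ)
    (hdiff : ∀ y ∈ Set.Ici (0 : ℝ), DifferentiableAt ℝ f y)
    (hconc : StrictAntiOn (deriv f) (Set.Ici (0 : ℝ)))
    (hf0 : f 0 = 0)
    (hr : 0 < r)
    (hxbar0_pos : 0 < xbar0)
    (hxbar0 : f xbar0 = r * xbar0)
    (hTb : 0 < Tb) (hT : Tb < T)
    (hx_cont : ContinuousOn x (Set.Icc 0 T))
    (hx_pos : ∀ t ∈ Set.Icc (0 : ℝ) T, 0 < x t)
    (hday : ∀ t ∈ Set.Ioo (0 : ℝ) Tb, HasDerivAt x (f (x t) - r * x t) t)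
    (hnight : ∀ t ∈ Set.Ioo Tb T, HasDerivAt x (-(r * x t)) t)
    (hinit : xbar0 ≤ x 0) :
    x T < x 0 := by
  have hf : StrictConcaveOn ℝ (Ici 0) f :=
    (hconc.mono interior_subset).strictConcaveOn_of_deriv (convex_Ici 0)
      fun y hy ↦ (hdiff y hy).continuousAt.continuousWithinAt
  have hnet_neg : ∀ y, xbar0 < y → f y - r * y ≤ 0 := fun y hy ↦
    sub_nonpos.2 (hf.lt_mul_of_map_eq_mul hf0 hxbar0_pos hxbar0 hy).le
  have hday_le : x Tb ≤ x 0 :=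
    le_apply_left_of_hasDerivAt_nonpos_of_gt (hx_cont.mono (Icc_subset_Icc_right hT.le)) hday
      (fun t _ hxt ↦ hnet_neg _ (hinit.trans_lt hxt)) Tb (right_mem_Icc.2 hTb.le)
  have hnight_anti : StrictAntiOn x (Icc Tb T) := by
    refine strictAntiOn_of_hasDerivWithinAt_neg (f' := fun t ↦ -(r * x t)) (convex_Icc _ _)
      (hx_cont.mono (Icc_subset_Icc_left hTb.le)) ?_ ?_ <;> rw [interior_Icc] <;> intro t ht
    · exact (hnight t ht).hasDerivWithinAt
    · exact neg_neg_of_pos (mul_pos hr (hx_pos t ⟨hTb.le.trans ht.1.le, ht.2.le⟩))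
  exact (hnight_anti (left_mem_Icc.2 hT.le) (right_mem_Icc.2 hT.le) hT).trans_le hday_le

/-- If the closed reactor starts at or above the positive day-equilibrium `x̄⁰`
(the unique `x > 0` with `f x = r x`), then the biomass after one day is strictly
smaller than at the start: `x(T) < x(0)`. -/
theorem closed_reactor_decrease_above_equilibrium
    (f : ℝ → ℝ) (r Tb T xbar0 : ℝ) (x : ℝ → ℝ)
    (hdiff : ∀ y ∈ Set.Ici (0 : ℝ), DifferentiableAt ℝ f y)
    (hderiv_cont : ContinuousOn (deriv f) (Set.Ici (0 : ℝ)))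
    (hconc : StrictAntiOn (deriv f) (Set.Ici (0 : ℝ)))
    (hbdd : BddAbove (f '' Set.Ici (0 : ℝ)))
    (hf0 : f 0 = 0)
    (hr : 0 < r)
    (hr' : r < deriv f 0)
    (hxbar0_pos : 0 < xbar0)
    (hxbar0 : f xbar0 = r * xbar0)
    (hTb : 0 < Tb) (hT : Tb < T)
    (hx_cont : ContinuousOn x (Set.Icc 0 T))
    (hx_pos : ∀ t ∈ Set.Icc (0 : ℝ) T, 0 < x t)
    (hday : ∀ t ∈ Set.Ioo (0 : ℝ) Tb, HasDerivAt x (f (x t) - r * x t) t)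
    (hnight : ∀ t ∈ Set.Ioo Tb T, HasDerivAt x (-(r * x t)) t)
    (hinit : xbar0 ≤ x 0) :
    x T < x 0 :=
  closed_reactor_decrease_above_equilibrium_general f r Tb T xbar0 x hdiff hconc hf0 hr hxbar0_pos
    hxbar0 hTb hT hx_cont hx_pos hday hnight hinit
end

section
/- Let f : ℝ → ℝ be continuously differentiable and strictly concave on [0,∞), bounded above, with f(0) = 0 and f'(0) > r > 0, and let x̄⁰ > 0 be the unique positive solution of f(x) = r·x. Let 0 < T̄ < T, let u : [0,T] → ℝ be continuous with u(t) ≥ 0, and let x : [0,T] → (0,∞) be a continuous solution of x' = f(x) − r·x − u·x on (0,T̄) and x' = −r·x − u·x on (T̄,T). If x(0) < x̄⁰ then x(t) < x̄⁰ for all t ∈ [0,T]. -/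
/-- Invariance of the region below the day-equilibrium `x̄⁰`: for any nonnegative
dilution `u`, a solution of the day/night dynamics starting below `x̄⁰` stays below
`x̄⁰` for the whole day. -/
theorem below_equilibrium_invariant
    (f : ℝ → ℝ) (r Tb T xbar0 : ℝ) (u x : ℝ → ℝ)
    (hdiff : ∀ y ∈ Set.Ici (0 : ℝ), DifferentiableAt ℝ f y)
    (hderiv_cont : ContinuousOn (deriv f) (Set.Ici (0 : ℝ)))
    (hconc : StrictAntiOn (deriv f) (Set.Ici (0 : ℝ)))
    (hbdd : BddAbove (f '' Set.Ici (0 : ℝ)))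
    (hf0 : f 0 = 0)
    (hr : 0 < r)
    (hr' : r < deriv f 0)
    (hxbar0_pos : 0 < xbar0)
    (hxbar0 : f xbar0 = r * xbar0)
    (hTb : 0 < Tb) (hT : Tb < T)
    (hu_cont : ContinuousOn u (Set.Icc 0 T))
    (hu_nonneg : ∀ t ∈ Set.Icc (0 : ℝ) T, 0 ≤ u t)
    (hx_cont : ContinuousOn x (Set.Icc 0 T))
    (hx_pos : ∀ t ∈ Set.Icc (0 : ℝ) T, 0 < x t)
    (hday : ∀ t ∈ Set.Ioo (0 : ℝ) Tb, HasDerivAt x (f (x t) - r * x t - u t * x t) t)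
    (hnight : ∀ t ∈ Set.Ioo Tb T, HasDerivAt x (-(r * x t) - u t * x t) t)
    (hinit : x 0 < xbar0) :
    ∀ t ∈ Set.Icc (0 : ℝ) T, x t < xbar0 := by
  have hfc : ContinuousOn f (Set.Ici 0) := fun y hy =>
    (hdiff y hy).continuousAt.continuousWithinAt
  set L : ℝ := r - deriv f xbar0 with hLdef
  -- key one-sided Lipschitz estimate on [0, xbar0]
  have key : ∀ z ∈ Set.Icc (0:ℝ) xbar0, f z - r * z ≤ L * (xbar0 - z) := by
    intro z hz
    have hmono : StrictMonoOn (fun z => f z - deriv f xbar0 * z) (Set.Icc 0 xbar0) := by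
      apply strictMonoOn_of_deriv_pos (convex_Icc _ _)
      · exact (hfc.mono Set.Icc_subset_Ici_self).sub
          ((continuous_const.mul continuous_id).continuousOn)
      · intro t ht
        rw [interior_Icc] at ht
        have ht0 : (0:ℝ) ≤ t := le_of_lt ht.1
        have hc : HasDerivAt (fun z => deriv f xbar0 * z) (deriv f xbar0) t := by
          simpa using (hasDerivAt_id t).const_mul (deriv f xbar0)
        have hd : HasDerivAt (fun z => f z - deriv f xbar0 * z)
            (deriv f t - deriv f xbar0) t := ((hdiff t ht0).hasDerivAt).sub hc
        rw [hd.deriv]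
        have := hconc (Set.mem_Ici.2 ht0) (Set.mem_Ici.2 hxbar0_pos.le) ht.2
        linarith
    rcases eq_or_lt_of_le hz.2 with h | h
    · rw [h]; nlinarith [hxbar0]
    · have hle := (hmono hz (Set.mem_Icc.2 ⟨hxbar0_pos.le, le_refl _⟩) h).le
      simp only at hle
      nlinarith [hxbar0]
  -- day phase
  have hday_lt : ∀ t ∈ Set.Icc (0:ℝ) Tb, x t < xbar0 := by
    by_contra hcon
    push_neg at hcon
    obtain ⟨t1, ht1, hxt1⟩ := hcon
    have hsub : Set.Icc (0:ℝ) Tb ⊆ Set.Icc (0:ℝ) T :=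
      Set.Icc_subset_Icc le_rfl hT.le
    set S := Set.Icc (0:ℝ) Tb ∩ x ⁻¹' Set.Ici xbar0 with hSdef
    have hS_ne : S.Nonempty := ⟨t1, ht1, hxt1⟩
    have hS_closed : IsClosed S :=
      (hx_cont.mono hsub).preimage_isClosed_of_isClosed isClosed_Icc isClosed_Ici
    have hbddS : BddBelow S := ⟨0, fun t ht => ht.1.1⟩
    set t0 := sInf S with ht0def
    have ht0S : t0 ∈ S := hS_closed.csInf_mem hS_ne hbddS
    have ht0Icc : t0 ∈ Set.Icc (0:ℝ) Tb := ht0S.1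
    have hlt : ∀ t, 0 ≤ t → t < t0 → x t < xbar0 := by
      intro t h0 hlt'
      by_contra hc; push_neg at hc
      exact absurd (csInf_le hbddS ⟨⟨h0, hlt'.le.trans ht0Icc.2⟩, hc⟩) (not_le.2 hlt')
    set g : ℝ → ℝ := fun t => (x t - xbar0) * Real.exp (L * t) with hgdef
    have hg_cont : ContinuousOn g (Set.Icc 0 t0) := by
      apply ContinuousOn.mul
      · exact ((hx_cont.mono (Set.Icc_subset_Icc le_rfl (ht0Icc.2.trans hT.le))).sub
          continuousOn_const)
      · exact (Real.continuous_exp.comp (continuous_const.mul continuous_id)).continuousOn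
    have hg_deriv : ∀ t ∈ Set.Ioo (0:ℝ) t0,
        HasDerivAt g ((f (x t) - r * x t - u t * x t) * Real.exp (L * t)
          + (x t - xbar0) * (Real.exp (L * t) * L)) t := by
      intro t ht
      have htday : t ∈ Set.Ioo (0:ℝ) Tb := ⟨ht.1, lt_of_lt_of_le ht.2 ht0Icc.2⟩
      have hx' := (hday t htday).sub_const xbar0
      have hexp : HasDerivAt (fun s => Real.exp (L * s)) (Real.exp (L * t) * L) t := by
        have : HasDerivAt (fun s : ℝ => L * s) L t := by
          simpa using (hasDerivAt_id t).const_mul L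
        exact this.exp
      exact hx'.mul hexp
    have hg_anti : AntitoneOn g (Set.Icc 0 t0) := by
      apply antitoneOn_of_deriv_nonpos (convex_Icc _ _) hg_cont
      · intro t ht
        rw [interior_Icc] at ht
        exact (hg_deriv t ht).differentiableAt.differentiableWithinAt
      · intro t ht
        rw [interior_Icc] at ht
        rw [(hg_deriv t ht).deriv]
        have htIccT : t ∈ Set.Icc (0:ℝ) T :=
          ⟨ht.1.le, (ht.2.le.trans ht0Icc.2).trans hT.le⟩
        have hxpos := hx_pos t htIccT
        have hxlt : x t < xbar0 := hlt t ht.1.le ht.2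
        have hkey := key (x t) ⟨hxpos.le, hxlt.le⟩
        have hu := hu_nonneg t htIccT
        have hexp_pos : 0 < Real.exp (L * t) := Real.exp_pos _
        nlinarith [mul_nonneg hu hxpos.le]
    have h0mem : (0:ℝ) ∈ Set.Icc (0:ℝ) t0 := ⟨le_refl 0, ht0Icc.1⟩
    have ht0mem : t0 ∈ Set.Icc (0:ℝ) t0 := ⟨ht0Icc.1, le_refl _⟩
    have hle := hg_anti h0mem ht0mem ht0Icc.1
    have hg0 : g 0 < 0 := by
      simp only [hgdef, mul_zero, Real.exp_zero, mul_one]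
      linarith
    have hgt0 : 0 ≤ g t0 := by
      have : xbar0 ≤ x t0 := ht0S.2
      exact mul_nonneg (by linarith) (Real.exp_pos _).le
    linarith
  -- night phase: x is antitone on [Tb, T]
  have hnight_anti : AntitoneOn x (Set.Icc Tb T) := by
    apply antitoneOn_of_deriv_nonpos (convex_Icc _ _)
      (hx_cont.mono (Set.Icc_subset_Icc hTb.le le_rfl))
    · intro t ht
      rw [interior_Icc] at ht
      exact (hnight t ht).differentiableAt.differentiableWithinAt
    · intro t ht
      rw [interior_Icc] at ht
      rw [(hnight t ht).deriv]
      have htIccT : t ∈ Set.Icc (0:ℝ) T := ⟨(hTb.trans ht.1).le, ht.2.le⟩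
      have hxpos := hx_pos t htIccT
      have hu := hu_nonneg t htIccT
      nlinarith [mul_nonneg hu hxpos.le]
  intro t ht
  by_cases htb : t ≤ Tb
  · exact hday_lt t ⟨ht.1, htb⟩
  · push_neg at htb
    have h1 : x t ≤ x Tb :=
      hnight_anti ⟨le_refl _, hT.le⟩ ⟨htb.le, ht.2⟩ htb.le
    have h2 : x Tb < xbar0 := hday_lt Tb ⟨hTb.le, le_refl _⟩
    linarith
end

section
/- Let f : ℝ → ℝ be continuously differentiable and strictly concave on [0,∞), bounded above, with f(0) = 0, and let r > 0, 0 < T̄ < T satisfy Assumption 1: f'(0)·T̄ > r·T. Let x̄⁰ > 0 be the unique positive solution of f(x) = r·x. Then there is a unique x₀ᶠ ∈ (0, x̄⁰) such that the solution of the closed-reactor dynamics x' = f(x) − r·x on (0,T̄), x' = −r·x on (T̄,T) with x(0) = x₀ᶠ satisfies x(T) = x₀ᶠ. Moreover, for any initial condition x₀ ∈ (0, x₀ᶠ) the corresponding solution satisfies x(T) > x₀, and for any x₀ > x₀ᶠ it satisfies x(T) < x₀. -/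
/-!
Write `F x = f x - r x` for the day vector field. Strict concavity and `F 0 = 0` make the
per-capita rate `F x / x` strictly decreasing. For two day trajectories the log-ratio
`ψ = log v - log u` therefore satisfies `ψ ψ' < 0` wherever `ψ ≠ 0`: `ψ²` decreases, so the
trajectories cannot cross, and `ψ` strictly decreases while positive. Hence the period map
`P x₀ = X x₀ T` is nondecreasing with `P x₀ / x₀` strictly decreasing, which already makes `P`
continuous and gives uniqueness and the sign of `P x₀ - x₀` on either side of a fixed point.
Since `x̄⁰` is a day equilibrium, `P x̄⁰ = x̄⁰ e^{-r(T-T̄)} < x̄⁰`; a small `x₀` keeps the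
trajectory where `F x / x` is close to `f'(0) - r`, and Assumption 1 gives `P x₀ > x₀`.
The intermediate value theorem provides the fixed point.
-/

open Set Filter Topology Real

section PerCapitaRate

variable {F : ℝ → ℝ} {K : ℝ}

theorem StrictConcaveOn.strictAntiOn_div (hF : StrictConcaveOn ℝ (Ici 0) F) (hF0 : F 0 = 0) :
    StrictAntiOn (fun x => F x / x) (Ioi 0) := fun x hx y hy hxy => by
  simpa [hF0] using hF.secant_strict_mono self_mem_Ici (mem_Ici.2 (le_of_lt hx))
    (mem_Ici.2 (le_of_lt hy)) (ne_of_gt hx) (ne_of_gt hy) hxy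

theorem ConcaveOn.div_le_of_hasDerivAt (hF : ConcaveOn ℝ (Ici 0) F) (hF0 : F 0 = 0)
    (hK : HasDerivAt F K 0) {x : ℝ} (hx : 0 < x) : F x / x ≤ K := by
  simpa [slope_def_field, hF0] using hF.slope_le_of_hasDerivAt self_mem_Ici (mem_Ici.2 hx.le) hx hK

theorem tendsto_div_nhdsGT_zero (hF0 : F 0 = 0) (hK : HasDerivAt F K 0) :
    Tendsto (fun x => F x / x) (𝓝[>] 0) (𝓝 K) := by
  refine ((hasDerivAt_iff_tendsto_slope.1 hK).mono_left
    (nhdsWithin_mono 0 fun x hx => ne_of_gt hx)).congr fun x => ?_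
  simp [slope_def_field, hF0]

end PerCapitaRate

theorem antitoneOn_sq_of_mul_deriv_nonpos {ψ ψ' : ℝ → ℝ} {a b : ℝ}
    (hψ : ContinuousOn ψ (Icc a b)) (hψ' : ∀ s ∈ Ioo a b, HasDerivAt ψ (ψ' s) s)
    (hsign : ∀ s ∈ Ioo a b, ψ s * ψ' s ≤ 0) : AntitoneOn (fun s => ψ s ^ 2) (Icc a b) := by
  refine antitoneOn_of_hasDerivWithinAt_nonpos (f' := fun s => 2 * (ψ s * ψ' s))
    (convex_Icc a b) (hψ.pow 2) (fun s hs => ?_) (fun s hs => ?_)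
  · rw [interior_Icc] at hs ⊢
    exact (((hψ' s hs).pow 2).congr_deriv (by ring)).hasDerivWithinAt
  · rw [interior_Icc] at hs
    linarith [hsign s hs]

theorem nonneg_and_lt_of_mul_deriv_neg {ψ ψ' : ℝ → ℝ} {a b : ℝ} (hab : a < b)
    (hψ : ContinuousOn ψ (Icc a b)) (hψ' : ∀ s ∈ Ioo a b, HasDerivAt ψ (ψ' s) s)
    (hsign : ∀ s ∈ Ioo a b, ψ s ≠ 0 → ψ s * ψ' s < 0) (ha : 0 < ψ a) :
    0 ≤ ψ b ∧ ψ b < ψ a := by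
  by_cases hzero : ∃ s ∈ Icc a b, ψ s ≤ 0
  · obtain ⟨s, hs, hψs⟩ := hzero
    obtain ⟨c, hc, hψc⟩ : ∃ c ∈ Icc a s, ψ c = 0 :=
      intermediate_value_Icc' hs.1 (hψ.mono (Icc_subset_Icc_right hs.2)) ⟨hψs, ha.le⟩
    have hsq := antitoneOn_sq_of_mul_deriv_nonpos hψ hψ'
      (fun s hs => by
        by_cases h : ψ s = 0
        · simp [h]
        · exact (hsign s hs h).le)
      ⟨hc.1, hc.2.trans hs.2⟩ (right_mem_Icc.2 hab.le) (hc.2.trans hs.2)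
    -- a zero of `ψ` is absorbing, since `ψ ^ 2` cannot increase
    have hψb : ψ b = 0 := by simpa [hψc] using hsq
    exact ⟨hψb.ge, hψb ▸ ha⟩
  · push Not at hzero
    refine ⟨(hzero b (right_mem_Icc.2 hab.le)).le,
      strictAntiOn_of_hasDerivWithinAt_neg (f' := ψ') (convex_Icc a b) hψ (fun s hs => ?_)
        (fun s hs => ?_) (left_mem_Icc.2 hab.le) (right_mem_Icc.2 hab.le) hab⟩
    · rw [interior_Icc] at hs ⊢
      exact (hψ' s hs).hasDerivWithinAt
    · rw [interior_Icc] at hs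
      have hpos := hzero s (Ioo_subset_Icc_self hs)
      exact neg_of_mul_neg_right (hsign s hs hpos.ne') hpos.le

structure IsPosSolution (F u : ℝ → ℝ) (a b : ℝ) : Prop where
  continuousOn : ContinuousOn u (Icc a b)
  pos : ∀ t ∈ Icc a b, 0 < u t
  hasDerivAt : ∀ t ∈ Ioo a b, HasDerivAt u (F (u t)) t

namespace IsPosSolution

variable {F u v : ℝ → ℝ} {a b : ℝ}

theorem mono {a' b' : ℝ} (h : IsPosSolution F u a b) (ha : a ≤ a') (hb : b' ≤ b) :
    IsPosSolution F u a' b' :=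
  ⟨h.continuousOn.mono (Icc_subset_Icc ha hb), fun t ht => h.pos t ⟨ha.trans ht.1, ht.2.trans hb⟩,
    fun t ht => h.hasDerivAt t ⟨ha.trans_lt ht.1, ht.2.trans_le hb⟩⟩

theorem continuousOn_log (h : IsPosSolution F u a b) :
    ContinuousOn (fun t => log (u t)) (Icc a b) :=
  h.continuousOn.log fun t ht => (h.pos t ht).ne'

theorem hasDerivAt_log (h : IsPosSolution F u a b) {t : ℝ} (ht : t ∈ Ioo a b) :
    HasDerivAt (fun s => log (u s)) (F (u t) / u t) t :=
  (h.hasDerivAt t ht).log (h.pos t (Ioo_subset_Icc_self ht)).ne'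

theorem exists_log_sub_eq (h : IsPosSolution F u a b) (hab : a < b) :
    ∃ σ ∈ Ioo a b, log (u b) - log (u a) = F (u σ) / u σ * (b - a) := by
  obtain ⟨σ, hσ, hslope⟩ := exists_hasDerivAt_eq_slope _ _ hab h.continuousOn_log
    fun t ht => h.hasDerivAt_log ht
  exact ⟨σ, hσ, by rw [hslope, div_mul_cancel₀ _ (sub_ne_zero.2 hab.ne')]⟩

theorem le_mul_exp {K : ℝ} (h : IsPosSolution F u a b) (hab : a ≤ b)
    (hK : ∀ x, 0 < x → F x / x ≤ K) : u b ≤ u a * exp (K * (b - a)) := by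
  rcases hab.eq_or_lt with rfl | hab
  · simp
  obtain ⟨σ, hσ, hlog⟩ := h.exists_log_sub_eq hab
  have hua := h.pos a (left_mem_Icc.2 hab.le)
  rw [← log_le_log_iff (h.pos b (right_mem_Icc.2 hab.le)) (by positivity), log_mul hua.ne'
    (exp_pos _).ne', log_exp]
  nlinarith [hK _ (h.pos σ (Ioo_subset_Icc_self hσ))]

theorem mul_exp_lt {κ : ℝ} (h : IsPosSolution F u a b) (hab : a < b)
    (hκ : ∀ t ∈ Icc a b, κ < F (u t) / u t) : u a * exp (κ * (b - a)) < u b := by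
  obtain ⟨σ, hσ, hlog⟩ := h.exists_log_sub_eq hab
  have hua := h.pos a (left_mem_Icc.2 hab.le)
  rw [← log_lt_log_iff (by positivity) (h.pos b (right_mem_Icc.2 hab.le)), log_mul hua.ne'
    (exp_pos _).ne', log_exp]
  nlinarith [hκ σ (Ioo_subset_Icc_self hσ)]

theorem eq_mul_exp {r : ℝ} (h : IsPosSolution (fun x => -(r * x)) u a b) (hab : a < b) :
    u b = u a * exp (-(r * (b - a))) := by
  obtain ⟨σ, hσ, hlog⟩ := h.exists_log_sub_eq hab
  have hua := h.pos a (left_mem_Icc.2 hab.le)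
  rw [neg_div, mul_div_cancel_right₀ _ (h.pos σ (Ioo_subset_Icc_self hσ)).ne'] at hlog
  rw [← exp_log (h.pos b (right_mem_Icc.2 hab.le)), ← exp_log hua, ← exp_add]
  congr 1
  linarith

section Comparison

variable (hF : StrictAntiOn (fun x => F x / x) (Ioi 0))
include hF

theorem log_sub_mul_rate_sub_neg {x y : ℝ} (hx : 0 < x) (hy : 0 < y) (hxy : log y - log x ≠ 0) :
    (log y - log x) * (F y / y - F x / x) < 0 := by
  rcases lt_trichotomy x y with hlt | rfl | hlt
  · exact mul_neg_of_pos_of_neg (sub_pos.2 (log_lt_log hx hlt)) (sub_neg.2 (hF hx hy hlt))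
  · simp at hxy
  · exact mul_neg_of_neg_of_pos (sub_neg.2 (log_lt_log hy hlt)) (sub_pos.2 (hF hy hx hlt))

theorem log_sub_mul_rate_sub_nonpos {x y : ℝ} (hx : 0 < x) (hy : 0 < y) :
    (log y - log x) * (F y / y - F x / x) ≤ 0 := by
  by_cases hxy : log y - log x = 0
  · simp [hxy]
  · exact (log_sub_mul_rate_sub_neg hF hx hy hxy).le

theorem eq_of_eq_at_left (hu : IsPosSolution F u a b) (hv : IsPosSolution F v a b) (hab : a ≤ b)
    (h : u a = v a) : u b = v b := by
  have hsq := antitoneOn_sq_of_mul_deriv_nonpos (hv.continuousOn_log.sub hu.continuousOn_log)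
    (fun t ht => (hv.hasDerivAt_log ht).sub (hu.hasDerivAt_log ht))
    (fun t ht => log_sub_mul_rate_sub_nonpos hF (hu.pos t (Ioo_subset_Icc_self ht))
      (hv.pos t (Ioo_subset_Icc_self ht)))
    (left_mem_Icc.2 hab) (right_mem_Icc.2 hab) hab
  refine (log_injOn_pos (hu.pos b (right_mem_Icc.2 hab)) (hv.pos b (right_mem_Icc.2 hab)) ?_)
  simp only [Pi.sub_apply, h, sub_self] at hsq
  nlinarith

theorem le_and_div_lt_of_lt_at_left (hu : IsPosSolution F u a b) (hv : IsPosSolution F v a b)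
    (hab : a < b) (h : u a < v a) : u b ≤ v b ∧ v b / v a < u b / u a := by
  have hua := hu.pos a (left_mem_Icc.2 hab.le)
  have hva := hv.pos a (left_mem_Icc.2 hab.le)
  have hub := hu.pos b (right_mem_Icc.2 hab.le)
  have hvb := hv.pos b (right_mem_Icc.2 hab.le)
  obtain ⟨hle, hlt⟩ := nonneg_and_lt_of_mul_deriv_neg hab
    (hv.continuousOn_log.sub hu.continuousOn_log)
    (fun t ht => (hv.hasDerivAt_log ht).sub (hu.hasDerivAt_log ht))
    (fun t ht => log_sub_mul_rate_sub_neg hF (hu.pos t (Ioo_subset_Icc_self ht))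
      (hv.pos t (Ioo_subset_Icc_self ht)))
    (sub_pos.2 (log_lt_log hua h))
  simp only [Pi.sub_apply] at hle hlt
  refine ⟨(log_le_log_iff hub hvb).1 (sub_nonneg.1 hle), ?_⟩
  rw [← log_lt_log_iff (by positivity) (by positivity), log_div hvb.ne' hva.ne',
    log_div hub.ne' hua.ne']
  linarith

end Comparison

end IsPosSolution

section Flow

variable {F : ℝ → ℝ} {Φ : ℝ → ℝ → ℝ} {a b : ℝ}
  (hΦ : ∀ x ∈ Ioi 0, IsPosSolution F (Φ x) a b) (hΦa : ∀ x ∈ Ioi 0, Φ x a = x)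
include hΦ hΦa

theorem monotoneOn_flow (hF : StrictAntiOn (fun x => F x / x) (Ioi 0)) (hab : a < b) :
    MonotoneOn (fun x => Φ x b) (Ioi 0) := by
  intro p hp q hq hpq
  rcases hpq.eq_or_lt with rfl | hpq
  · rfl
  exact ((hΦ p hp).le_and_div_lt_of_lt_at_left hF (hΦ q hq) hab (by rwa [hΦa p hp, hΦa q hq])).1

theorem strictAntiOn_flow_div (hF : StrictAntiOn (fun x => F x / x) (Ioi 0)) (hab : a < b) :
    StrictAntiOn (fun x => Φ x b / x) (Ioi 0) := by
  intro p hp q hq hpq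
  have := ((hΦ p hp).le_and_div_lt_of_lt_at_left hF (hΦ q hq) hab (by rwa [hΦa p hp, hΦa q hq])).2
  rwa [hΦa p hp, hΦa q hq] at this

theorem exists_mul_exp_lt_flow {K M c ε : ℝ}
    (hlim : Tendsto (fun x => F x / x) (𝓝[>] 0) (𝓝 K)) (hM : ∀ x, 0 < x → F x / x ≤ M)
    (hab : a < b) (hc : c < K * (b - a)) (hε : 0 < ε) :
    ∃ x ∈ Ioo 0 ε, x * exp c < Φ x b := by
  have hba : 0 < b - a := sub_pos.2 hab
  obtain ⟨δ, hδ, hrate⟩ := mem_nhdsGT_iff_exists_Ioo_subset.1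
    (hlim.eventually (lt_mem_nhds ((div_lt_iff₀ hba).2 hc)))
  set B := exp (|M| * (b - a))
  have hnear : ∀ᶠ x in 𝓝 (0 : ℝ), x < ε ∧ x * B < δ :=
    (eventually_lt_nhds hε).and (((continuous_id.mul continuous_const).tendsto' 0 0
      (by simp)).eventually (eventually_lt_nhds hδ))
  have hstart : ∀ᶠ x in 𝓝[>] (0 : ℝ), 0 < x ∧ x < ε ∧ x * B < δ :=
    eventually_mem_nhdsWithin.and (nhdsWithin_le_nhds hnear)
  obtain ⟨x, hx, hxε, hxδ⟩ := hstart.exists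
  refine ⟨x, ⟨hx, hxε⟩, ?_⟩
  have hsmall : ∀ t ∈ Icc a b, Φ x t < δ := fun t ht =>
    calc Φ x t ≤ Φ x a * exp (M * (t - a)) := ((hΦ x hx).mono le_rfl ht.2).le_mul_exp ht.1 hM
      _ ≤ x * B := by
        rw [hΦa x hx]
        refine mul_le_mul_of_nonneg_left (exp_le_exp.2 ?_) hx.le
        exact mul_le_mul (le_abs_self M) (by linarith [ht.2]) (by linarith [ht.1]) (abs_nonneg M)
      _ < δ := hxδ
  have := (hΦ x hx).mul_exp_lt hab fun t ht => hrate ⟨(hΦ x hx).pos t ht, hsmall t ht⟩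
  rwa [div_mul_cancel₀ _ hba.ne', hΦa x hx] at this

end Flow

theorem continuousOn_of_monotoneOn_of_antitoneOn_div {g : ℝ → ℝ} (hmono : MonotoneOn g (Ioi 0))
    (hdiv : AntitoneOn (fun x => g x / x) (Ioi 0)) : ContinuousOn g (Ioi 0) := by
  intro c (hc : 0 < c)
  -- `g y` lies between `g c` and `g c / c * y`
  have hlin : Tendsto (fun y => g c / c * y) (𝓝 c) (𝓝 (g c)) := by
    simpa [div_mul_cancel₀ _ hc.ne'] using (tendsto_id (x := 𝓝 c)).const_mul (g c / c)
  refine (tendsto_of_tendsto_of_tendsto_of_le_of_le'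
    (by simpa only [min_self] using (tendsto_const_nhds (x := g c)).min hlin)
    (by simpa only [max_self] using (tendsto_const_nhds (x := g c)).max hlin)
    ?_ ?_).mono_left nhdsWithin_le_nhds
    <;> filter_upwards [Ioi_mem_nhds hc] with y (hy : 0 < y)
    <;> rcases le_total y c with hyc | hcy
  · exact min_le_of_right_le ((le_div_iff₀ hy).1 (hdiv hy hc hyc))
  · exact min_le_of_left_le (hmono hc hy hcy)
  · exact le_max_of_le_left (hmono hy hc hyc)
  · exact le_max_of_le_right ((div_le_iff₀ hy).1 (hdiv hc hy hcy))

theorem existsUnique_fixedPoint_of_monotoneOn {g : ℝ → ℝ} {a b : ℝ} (ha : 0 < a) (hab : a ≤ b)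
    (hmono : MonotoneOn g (Ioi 0)) (hdiv : StrictAntiOn (fun x => g x / x) (Ioi 0))
    (hga : a < g a) (hgb : g b < b) :
    ∃! x, (0 < x ∧ x < b) ∧ g x = x ∧ (∀ y, 0 < y → y < x → y < g y) ∧
      (∀ y, x < y → g y < y) := by
  have hcont : ContinuousOn (fun x => g x - x) (Icc a b) :=
    ((continuousOn_of_monotoneOn_of_antitoneOn_div hmono hdiv.antitoneOn).sub
      continuousOn_id).mono fun x hx => ha.trans_le hx.1
  obtain ⟨x, hx, hgx⟩ := intermediate_value_Ioo' hab hcont ⟨sub_neg.2 hgb, sub_pos.2 hga⟩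
  have hx0 : 0 < x := ha.trans hx.1
  have hfix : g x = x := sub_eq_zero.1 hgx
  have hbelow : ∀ y, 0 < y → y < x → y < g y := fun y hy hyx => by
    have : 1 < g y / y := by simpa [hfix, div_self hx0.ne'] using hdiv hy hx0 hyx
    exact (one_lt_div hy).1 this
  have habove : ∀ y, x < y → g y < y := fun y hxy => by
    have hy := hx0.trans hxy
    have : g y / y < 1 := by simpa [hfix, div_self hx0.ne'] using hdiv hx0 hy hxy
    exact (div_lt_one hy).1 this
  refine ⟨x, ⟨⟨hx0, hx.2⟩, hfix, hbelow, habove⟩, fun y ⟨⟨hy, _⟩, hgy, _⟩ => ?_⟩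
  rcases lt_trichotomy y x with h | h | h
  · exact absurd hgy (hbelow y hy h).ne'
  · exact h
  · exact absurd hgy (habove y h).ne

theorem existsUnique_fixedPoint_of_eq_flow_mul_exp {F P : ℝ → ℝ} {Φ : ℝ → ℝ → ℝ}
    {a b c K xe : ℝ} (hF : StrictConcaveOn ℝ (Ici 0) F) (hF0 : F 0 = 0) (hK : HasDerivAt F K 0)
    (hΦ : ∀ x ∈ Ioi 0, IsPosSolution F (Φ x) a b) (hΦa : ∀ x ∈ Ioi 0, Φ x a = x) (hab : a < b)
    (hc : 0 < c) (hcK : c < K * (b - a)) (hxe : 0 < xe) (hFxe : F xe = 0)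
    (hP : ∀ x ∈ Ioi 0, P x = Φ x b * exp (-c)) :
    ∃! x, (0 < x ∧ x < xe) ∧ P x = x ∧ (∀ y, 0 < y → y < x → y < P y) ∧
      (∀ y, x < y → P y < y) := by
  have hrate := hF.strictAntiOn_div hF0
  obtain ⟨x₁, ⟨hx₁, hx₁xe⟩, hgrow⟩ := exists_mul_exp_lt_flow hΦ hΦa (tendsto_div_nhdsGT_zero hF0 hK)
    (fun x hx => hF.concaveOn.div_le_of_hasDerivAt hF0 hK hx) hab hcK hxe
  have hxe_eq : Φ xe b = xe := (hΦ xe hxe).eq_of_eq_at_left hrate (v := fun _ => xe)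
    ⟨continuousOn_const, fun _ _ => hxe, fun t _ => by simpa [hFxe] using hasDerivAt_const t xe⟩
    hab.le (hΦa xe hxe)
  refine existsUnique_fixedPoint_of_monotoneOn hx₁ hx₁xe.le (fun p hp q hq hpq => ?_)
    (fun p hp q hq hpq => ?_) ?_ ?_
  · rw [hP p hp, hP q hq]
    exact mul_le_mul_of_nonneg_right (monotoneOn_flow hΦ hΦa hrate hab hp hq hpq) (exp_pos _).le
  · simp only [hP p hp, hP q hq, mul_div_right_comm]
    exact mul_lt_mul_of_pos_right (strictAntiOn_flow_div hΦ hΦa hrate hab hp hq hpq) (exp_pos _)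
  · calc x₁ = x₁ * exp c * exp (-c) := by
          rw [mul_assoc, ← exp_add, add_neg_cancel, exp_zero, mul_one]
      _ < P x₁ := by rw [hP x₁ hx₁]; exact mul_lt_mul_of_pos_right hgrow (exp_pos _)
  · rw [hP xe hxe, hxe_eq]
    exact mul_lt_of_lt_one_right hxe (exp_lt_one_iff.2 (neg_lt_zero.2 hc))

theorem closed_reactor_periodic_point_general
    (f : ℝ → ℝ) (r Tb T xbar0 : ℝ) (X : ℝ → ℝ → ℝ)
    (hdiff : ∀ y ∈ Set.Ici (0 : ℝ), DifferentiableAt ℝ f y)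
    (hconc : StrictAntiOn (deriv f) (Set.Ici (0 : ℝ)))
    (hf0 : f 0 = 0)
    (hr : 0 < r)
    (hTb : 0 < Tb) (hT : Tb < T)
    (hassum : r * T < deriv f 0 * Tb)
    (hxbar0_pos : 0 < xbar0)
    (hxbar0 : f xbar0 = r * xbar0)
    (hX_init : ∀ x₀ : ℝ, 0 < x₀ → X x₀ 0 = x₀)
    (hX_cont : ∀ x₀ : ℝ, 0 < x₀ → ContinuousOn (X x₀) (Set.Icc 0 T))
    (hX_pos : ∀ x₀ : ℝ, 0 < x₀ → ∀ t ∈ Set.Icc (0 : ℝ) T, 0 < X x₀ t)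
    (hX_day : ∀ x₀ : ℝ, 0 < x₀ →
      ∀ t ∈ Set.Ioo (0 : ℝ) Tb, HasDerivAt (X x₀) (f (X x₀ t) - r * X x₀ t) t)
    (hX_night : ∀ x₀ : ℝ, 0 < x₀ →
      ∀ t ∈ Set.Ioo Tb T, HasDerivAt (X x₀) (-(r * X x₀ t)) t) :
    ∃! x₀f : ℝ, (0 < x₀f ∧ x₀f < xbar0) ∧ X x₀f T = x₀f ∧
      (∀ x₀ : ℝ, 0 < x₀ → x₀ < x₀f → x₀ < X x₀ T) ∧
      (∀ x₀ : ℝ, x₀f < x₀ → X x₀ T < x₀) := by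
  set F : ℝ → ℝ := fun x => f x - r * x with hFdef
  have hFconc : StrictConcaveOn ℝ (Ici 0) F :=
    (hconc.mono interior_subset).strictConcaveOn_of_deriv (convex_Ici 0)
      (fun y hy => (hdiff y hy).continuousAt.continuousWithinAt)
      |>.sub_convexOn ((convexOn_id (convex_Ici 0)).smul hr.le)
  have hF' : HasDerivAt F (deriv f 0 - r) 0 :=
    (hdiff 0 self_mem_Ici).hasDerivAt.sub (by simpa using (hasDerivAt_id 0).const_mul r)
  have hday : ∀ x₀ ∈ Ioi (0 : ℝ), IsPosSolution F (X x₀) 0 Tb := fun x₀ h =>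
    ⟨(hX_cont x₀ h).mono (Icc_subset_Icc_right hT.le),
      fun t ht => hX_pos x₀ h t ⟨ht.1, ht.2.trans hT.le⟩, hX_day x₀ h⟩
  have hnight : ∀ x₀ ∈ Ioi (0 : ℝ), IsPosSolution (fun x => -(r * x)) (X x₀) Tb T := fun x₀ h =>
    ⟨(hX_cont x₀ h).mono (Icc_subset_Icc_left hTb.le),
      fun t ht => hX_pos x₀ h t ⟨hTb.le.trans ht.1, ht.2⟩, hX_night x₀ h⟩
  exact existsUnique_fixedPoint_of_eq_flow_mul_exp hFconc (by simp [hFdef, hf0]) hF' hday hX_init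
    hTb (by nlinarith) (by linarith) hxbar0_pos (by simp [hFdef, hxbar0])
    fun x₀ h => (hnight x₀ h).eq_mul_exp hT

/-- Under Assumption 1 (`f'(0)·T̄ > r·T`), the closed-reactor day/night flow `X x₀`
has a unique positive fixed point `x₀ᶠ ∈ (0, x̄⁰)` over one period: `X x₀ᶠ T = x₀ᶠ`,
solutions starting below `x₀ᶠ` end the day above their starting point, and solutions
starting above `x₀ᶠ` end the day below it. -/
theorem closed_reactor_periodic_point
    (f : ℝ → ℝ) (r Tb T xbar0 : ℝ) (X : ℝ → ℝ → ℝ)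
    (hdiff : ∀ y ∈ Set.Ici (0 : ℝ), DifferentiableAt ℝ f y)
    (hderiv_cont : ContinuousOn (deriv f) (Set.Ici (0 : ℝ)))
    (hconc : StrictAntiOn (deriv f) (Set.Ici (0 : ℝ)))
    (hbdd : BddAbove (f '' Set.Ici (0 : ℝ)))
    (hf0 : f 0 = 0)
    (hr : 0 < r)
    (hTb : 0 < Tb) (hT : Tb < T)
    (hassum : r * T < deriv f 0 * Tb)
    (hxbar0_pos : 0 < xbar0)
    (hxbar0 : f xbar0 = r * xbar0)
    (hX_init : ∀ x₀ : ℝ, 0 < x₀ → X x₀ 0 = x₀)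
    (hX_cont : ∀ x₀ : ℝ, 0 < x₀ → ContinuousOn (X x₀) (Set.Icc 0 T))
    (hX_pos : ∀ x₀ : ℝ, 0 < x₀ → ∀ t ∈ Set.Icc (0 : ℝ) T, 0 < X x₀ t)
    (hX_day : ∀ x₀ : ℝ, 0 < x₀ →
      ∀ t ∈ Set.Ioo (0 : ℝ) Tb, HasDerivAt (X x₀) (f (X x₀ t) - r * X x₀ t) t)
    (hX_night : ∀ x₀ : ℝ, 0 < x₀ →
      ∀ t ∈ Set.Ioo Tb T, HasDerivAt (X x₀) (-(r * X x₀ t)) t) :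
    ∃! x₀f : ℝ, (0 < x₀f ∧ x₀f < xbar0) ∧ X x₀f T = x₀f ∧
      (∀ x₀ : ℝ, 0 < x₀ → x₀ < x₀f → x₀ < X x₀ T) ∧
      (∀ x₀ : ℝ, x₀f < x₀ → X x₀ T < x₀) :=
  closed_reactor_periodic_point_general f r Tb T xbar0 X hdiff hconc hf0 hr hTb hT hassum hxbar0_pos
    hxbar0 hX_init hX_cont hX_pos hX_day hX_night
end

section
/- Let r > 0, let t₀ < t₁, and let u : [t₀,t₁] → ℝ be continuous with u(t) ≥ 0. Let λ : [t₀,t₁] → ℝ be a solution of the dark-phase adjoint equation λ'(t) = λ(t)·(r + u(t)) − u(t). If λ(t₀) ≥ 1, then λ(t) > 1 for all t ∈ (t₀, t₁]. In particular, the switching function 1 − λ cannot change sign from negative to positive during the dark phase, i.e. no switch of the optimal dilution from u = 0 to u = ū can occur in the dark phase (Proposition 1(i)). -/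
/-!
Writing `μ = λ - 1`, the dark-phase equation becomes the linear equation `μ' = (r + u) μ + r`.
With a primitive `U` of `r + u`, the integrating factor gives `(μ e^{-U})' = r e^{-U} > 0`, so
`μ e^{-U}` is strictly increasing and starts nonnegative; hence `μ > 0` after `t₀`.
-/

open Set

theorem ContinuousOn.exists_forall_mem_Icc_hasDerivAt {E : Type*} [NormedAddCommGroup E]
    [NormedSpace ℝ E] [CompleteSpace E] {f : ℝ → E} {a b : ℝ} (hab : a ≤ b)
    (hf : ContinuousOn f (Icc a b)) : ∃ F : ℝ → E, ∀ x ∈ Icc a b, HasDerivAt F (f x) x := by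
  set g : ℝ → E := IccExtend hab ((Icc a b).domRestrict f)
  have hg : Continuous g := (continuousOn_iff_continuous_domRestrict.mp hf).Icc_extend'
  refine ⟨fun x => ∫ y in a..x, g y, fun x hx => ?_⟩
  have hgx : g x = f x := IccExtend_of_mem hab _ hx
  exact hgx ▸ (hg.integral_hasStrictDerivAt a x).hasDerivAt

theorem HasDerivAt.mul_exp_neg_of_eq_mul_add {μ F : ℝ → ℝ} {g h : ℝ → ℝ} {x : ℝ}
    (hμ : HasDerivAt μ (g x * μ x + h x) x) (hF : HasDerivAt F (g x) x) :
    HasDerivAt (fun y => μ y * Real.exp (-F y)) (h x * Real.exp (-F x)) x :=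
  (hμ.fun_mul hF.fun_neg.exp).congr_deriv (by ring)

theorem pos_of_hasDerivAt_eq_mul_add_of_pos {μ g h : ℝ → ℝ} {a b : ℝ}
    (hg : ContinuousOn g (Icc a b)) (hμ : ContinuousOn μ (Icc a b))
    (hμ' : ∀ x ∈ Ioo a b, HasDerivAt μ (g x * μ x + h x) x) (hh : ∀ x ∈ Ioo a b, 0 < h x)
    (ha : 0 ≤ μ a) : ∀ x ∈ Ioc a b, 0 < μ x := by
  intro x hx
  obtain ⟨F, hF⟩ := hg.exists_forall_mem_Icc_hasDerivAt (hx.1.le.trans hx.2)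
  set φ : ℝ → ℝ := fun y => μ y * Real.exp (-F y)
  have hφ_cont : ContinuousOn φ (Icc a b) :=
    hμ.mul (HasDerivAt.continuousOn fun y hy => (hF y hy).neg.exp)
  have hφ_mono : StrictMonoOn φ (Icc a b) := by
    refine strictMonoOn_of_deriv_pos (convex_Icc a b) hφ_cont fun y hy => ?_
    rw [interior_Icc] at hy
    rw [((hμ' y hy).mul_exp_neg_of_eq_mul_add (hF y (Ioo_subset_Icc_self hy))).deriv]
    exact mul_pos (hh y hy) (Real.exp_pos _)
  have hφx : 0 < φ x := calc
    0 ≤ φ a := mul_nonneg ha (Real.exp_pos _).le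
    _ < φ x := hφ_mono (left_mem_Icc.2 (hx.1.le.trans hx.2)) (Ioc_subset_Icc_self hx) hx.1
  exact pos_of_mul_pos_left hφx (Real.exp_pos _).le

theorem dark_phase_adjoint_stays_above_one_general
    (r t₀ t₁ : ℝ) (u lam : ℝ → ℝ)
    (hr : 0 < r)
    (hu_cont : ContinuousOn u (Set.Icc t₀ t₁))
    (hlam_cont : ContinuousOn lam (Set.Icc t₀ t₁))
    (hlam_deriv : ∀ t ∈ Set.Ioo t₀ t₁, HasDerivAt lam (lam t * (r + u t) - u t) t)
    (hlam0 : 1 ≤ lam t₀) :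
    ∀ t ∈ Set.Ioc t₀ t₁, 1 < lam t := by
  have hμ' : ∀ t ∈ Ioo t₀ t₁, HasDerivAt (fun s => lam s - 1) ((r + u t) * (lam t - 1) + r) t :=
    fun t ht => ((hlam_deriv t ht).sub_const 1).congr_deriv (by ring)
  intro t ht
  exact sub_pos.1 <| pos_of_hasDerivAt_eq_mul_add_of_pos (continuousOn_const.add hu_cont)
    (hlam_cont.sub continuousOn_const) hμ' (fun _ _ => hr) (sub_nonneg.2 hlam0) t ht

/-- Proposition 1(i): along the dark-phase adjoint dynamics
`λ' = λ·(r + u) − u` with `r > 0` and `u(t) ≥ 0`, if `λ(t₀) ≥ 1` then `λ(t) > 1`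
for all later times of the dark phase; hence no switch from `u = 0` to `u = ū`
can occur in the dark phase. -/
theorem dark_phase_adjoint_stays_above_one
    (r t₀ t₁ : ℝ) (u lam : ℝ → ℝ)
    (hr : 0 < r)
    (ht : t₀ < t₁)
    (hu_cont : ContinuousOn u (Set.Icc t₀ t₁))
    (hu_nonneg : ∀ t ∈ Set.Icc t₀ t₁, 0 ≤ u t)
    (hlam_cont : ContinuousOn lam (Set.Icc t₀ t₁))
    (hlam_deriv : ∀ t ∈ Set.Ioo t₀ t₁, HasDerivAt lam (lam t * (r + u t) - u t) t)
    (hlam0 : 1 ≤ lam t₀) :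
    ∀ t ∈ Set.Ioc t₀ t₁, 1 < lam t :=
  dark_phase_adjoint_stays_above_one_general r t₀ t₁ u lam hr hu_cont hlam_cont hlam_deriv hlam0
end
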